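/- (Falling Edge Lemma) Let H be a mesh in which every axis size is a prime number, and let σ_0 →^{p} σ_1 →^{dynSlice(j,x)} σ_2 be a two-step sequence of collective operations between well-formed distributed types over H, where p is an allToAll or allPermute step. Then there exist r ≤ 2, labels q_1, …, q_r each of which is an allToAll or allPermute, with at most one of them an allToAll, a well-formed type σ_1′, a dimension index j′ and an axis x′, such that σ_0 →^{dynSlice(j′,x′)} σ_1′ →^{q_1} ⋯ →^{q_r} σ_2. -/

import Mathlib

/-! ## Meshes, index tuples, distributed dimensions and types -/

structure Mesh where
  axes : Finset String
  size : String → ℕ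
  size_pos : ∀ x ∈ axes, 1 ≤ size x

def Mesh.hasAxis (H : Mesh) (x : String) (n : ℕ) : Prop :=
  x ∈ H.axes ∧ H.size x = n

abbrev IndexTuple (H : Mesh) : Type :=
  {ι : String → ℕ // ∀ x : String, (x ∈ H.axes → ι x < H.size x) ∧ (x ∉ H.axes → ι x = 0)}

structure Dim where
  tile : ℕ
  axes : List String
  global : ℕ
deriving DecidableEq

abbrev DType := List Dim

def Mesh.WFDim (H : Mesh) (d : Dim) : Prop :=
  1 ≤ d.tile ∧ d.axes.Nodup ∧ (∀ x ∈ d.axes, x ∈ H.axes) ∧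
    d.tile * (d.axes.map H.size).prod = d.global

def Mesh.WFType (H : Mesh) (τ : DType) : Prop :=
  (∀ d ∈ τ, H.WFDim d) ∧ List.Pairwise (fun d e => ∀ x ∈ d.axes, x ∉ e.axes) τ

def globaltype (τ : DType) : List ℕ := τ.map Dim.global
def localtype (τ : DType) : List ℕ := τ.map Dim.tile
def localsize (τ : DType) : ℕ := (τ.map Dim.tile).prod

def typeAxes : DType → List String
  | [] => []
  | d :: τ => d.axes ++ typeAxes τ

/-- Base offset map of a distributed dimension, `⟦c{xs}n⟧_D`. -/
def dimOffset (H : Mesh) : ℕ → List String → (String → ℕ) → ℕ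
  | _, [], _ => 0
  | c, x :: xs, ι => c * ι x + dimOffset H (c * H.size x) xs ι

abbrev BOM (H : Mesh) : Type := IndexTuple H → List ℕ

/-- Base offset map of a distributed type, `⟦τ⟧_T`. -/
def typeOffset (H : Mesh) (τ : DType) : BOM H :=
  fun ι => τ.map (fun d => dimOffset H d.tile d.axes ι.val)

/-! ## Collective operations (high-level typing rules) -/

inductive Label where
  | allGather (i : ℕ)
  | dynSlice (i : ℕ) (x : String)
  | allToAll (i j : ℕ)
  | allPermute
deriving DecidableEq

inductive OpKind where
  | gather | slice | toAll | permute
deriving DecidableEq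

def Label.kind : Label → OpKind
  | .allGather _ => .gather
  | .dynSlice _ _ => .slice
  | .allToAll _ _ => .toAll
  | .allPermute => .permute

inductive Step (H : Mesh) : Label → DType → DType → Prop where
  | allGather {τ : DType} (i : ℕ) {c : ℕ} {x : String} {xs : List String} {s n : ℕ}
      (hwf : H.WFType τ) (hx : H.hasAxis x n)
      (hi : τ[i]? = some ⟨c, x :: xs, s⟩) :
      Step H (.allGather i) τ (τ.set i ⟨c * n, xs, s⟩)
  | dynSlice {τ : DType} (i : ℕ) (x : String) {c : ℕ} {xs : List String} {s n : ℕ}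
      (hwf : H.WFType τ) (hx : H.hasAxis x n) (hfresh : x ∉ typeAxes τ)
      (hi : τ[i]? = some ⟨c * n, xs, s⟩) :
      Step H (.dynSlice i x) τ (τ.set i ⟨c, x :: xs, s⟩)
  | allToAll {τ : DType} (i j : ℕ) {ci : ℕ} {x : String} {xsi : List String} {si cj : ℕ}
      {xsj : List String} {sj n : ℕ}
      (hwf : H.WFType τ) (hij : i ≠ j) (hx : H.hasAxis x n)
      (hi : τ[i]? = some ⟨ci, x :: xsi, si⟩)
      (hj : τ[j]? = some ⟨cj, xsj, sj⟩)
      (hdvd : n ∣ cj) :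
      Step H (.allToAll i j) τ ((τ.set i ⟨ci * n, xsi, si⟩).set j ⟨cj / n, x :: xsj, sj⟩)
  | allPermute {τ₁ τ₂ : DType}
      (hwf1 : H.WFType τ₁) (hwf2 : H.WFType τ₂)
      (hl : localtype τ₁ = localtype τ₂) (hg : globaltype τ₁ = globaltype τ₂) :
      Step H .allPermute τ₁ τ₂

/-! ## Sequences of collective operations -/

inductive CSeq (H : Mesh) : DType → DType → Type where
  | nil (τ : DType) : CSeq H τ τ
  | cons {τ₁ τ₂ τ₃ : DType} (p : Label) (h : Step H p τ₁ τ₂) (s : CSeq H τ₂ τ₃) : CSeq H τ₁ τ₃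

def CSeq.labels {H : Mesh} : {τ₁ τ₂ : DType} → CSeq H τ₁ τ₂ → List Label
  | _, _, .nil _ => []
  | _, _, .cons p _ s => p :: s.labels

def CSeq.typesList {H : Mesh} : {τ₁ τ₂ : DType} → CSeq H τ₁ τ₂ → List DType
  | _, _, .nil τ => [τ]
  | τ, _, .cons _ _ s => τ :: s.typesList

/-- The height 𝔥 of a sequence: the maximum `localsize` over all types in it. -/
def CSeq.height {H : Mesh} {τ₁ τ₂ : DType} (s : CSeq H τ₁ τ₂) : ℕ :=
  (s.typesList.map localsize).foldr max 0

/-- Cost of a single step with source `σ₁` and target `σ₂`. -/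
def stepCost (p : Label) (σ₁ σ₂ : DType) : ℕ :=
  match p with
  | .allGather _ => localsize σ₂
  | .dynSlice _ _ => 0
  | .allToAll _ _ => localsize σ₁
  | .allPermute => localsize σ₁

def CSeq.cost {H : Mesh} : {τ₁ τ₂ : DType} → CSeq H τ₁ τ₂ → ℕ
  | _, _, .nil _ => 0
  | _, _, @CSeq.cons _ σ₁ σ₂ _ p _ s => stepCost p σ₁ σ₂ + s.cost

/-- Normal form: labels matched by `dynSlice* {allToAll | allPermute}* allGather*`. -/
def NormalFormK (ks : List OpKind) : Prop :=
  ∃ a b c : List OpKind, ks = a ++ b ++ c ∧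
    (∀ k ∈ a, k = OpKind.slice) ∧
    (∀ k ∈ b, k = OpKind.toAll ∨ k = OpKind.permute) ∧
    (∀ k ∈ c, k = OpKind.gather)

/-! ## Weak collectives -/

/-- Equivalence of base offset maps. -/
def bomEquiv (H : Mesh) (β₁ β₂ : BOM H) : Prop :=
  ∃ π : Equiv.Perm (IndexTuple H), β₂ = β₁ ∘ π

/-- The weak collective relation `⟦τ₁⟧_E ▶^p ⟦τ₂⟧_E`, represented on types. -/
def WeakStep (H : Mesh) (p : Label) (τ₁ τ₂ : DType) : Prop :=
  p ≠ Label.allPermute ∧ H.WFType τ₁ ∧ H.WFType τ₂ ∧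
  ∃ σ₁ σ₂ : DType, Step H p σ₁ σ₂ ∧
    bomEquiv H (typeOffset H σ₁) (typeOffset H τ₁) ∧
    bomEquiv H (typeOffset H σ₂) (typeOffset H τ₂)

inductive WkSeq (H : Mesh) : DType → DType → Type where
  | nil (τ : DType) : WkSeq H τ τ
  | cons {τ₁ τ₂ τ₃ : DType} (p : Label) (h : WeakStep H p τ₁ τ₂) (s : WkSeq H τ₂ τ₃) :
      WkSeq H τ₁ τ₃

def WkSeq.labels {H : Mesh} : {τ₁ τ₂ : DType} → WkSeq H τ₁ τ₂ → List Label
  | _, _, .nil _ => []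
  | _, _, .cons p _ s => p :: s.labels

def WkSeq.typesList {H : Mesh} : {τ₁ τ₂ : DType} → WkSeq H τ₁ τ₂ → List DType
  | _, _, .nil τ => [τ]
  | τ, _, .cons _ _ s => τ :: s.typesList

def WkSeq.height {H : Mesh} {τ₁ τ₂ : DType} (s : WkSeq H τ₁ τ₂) : ℕ :=
  (s.typesList.map localsize).foldr max 0

def WkSeq.cost {H : Mesh} : {τ₁ τ₂ : DType} → WkSeq H τ₁ τ₂ → ℕ
  | _, _, .nil _ => 0
  | _, _, @WkSeq.cons _ σ₁ σ₂ _ p _ s => stepCost p σ₁ σ₂ + s.cost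

/-! ## Low-level MPI-style collectives on device assignments -/

abbrev DevMap (H : Mesh) (D : Type) := IndexTuple H ≃ D

structure DevAssign (H : Mesh) (D : Type) where
  dmap : DevMap H D
  bom : BOM H

inductive LLabel where
  | allGather (x : String)
  | allToAll (x : String) (j : ℕ)
  | dynSlice (i : ℕ) (x : String)
  | allPermute
deriving DecidableEq

def LLabel.kind : LLabel → OpKind
  | .allGather _ => .gather
  | .allToAll _ _ => .toAll
  | .dynSlice _ _ => .slice
  | .allPermute => .permute

inductive LStep (H : Mesh) (D : Type) : LLabel → DevAssign H D → DevAssign H D → Type where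
  | gather (τ : DType) (i : ℕ) (c : ℕ) (ys : List String) (x : String) (xs : List String)
      (s n : ℕ) (φ φ' : DevMap H D)
      (hwf : H.WFType τ) (hx : H.hasAxis x n)
      (hi : τ[i]? = some ⟨c, ys ++ x :: xs, s⟩)
      (hmap : typeOffset H (τ.set i ⟨c, x :: (ys ++ xs), s⟩) ∘ ⇑φ'.symm
            = typeOffset H τ ∘ ⇑φ.symm) :
      LStep H D (.allGather x) ⟨φ, typeOffset H τ⟩
        ⟨φ', typeOffset H (τ.set i ⟨c * n, ys ++ xs, s⟩)⟩
  | toAll (τ : DType) (i j : ℕ) (ci : ℕ) (ys : List String) (x : String) (xs : List String)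
      (si cj : ℕ) (xsj : List String) (sj n : ℕ) (φ φ' : DevMap H D)
      (hwf : H.WFType τ) (hij : i ≠ j) (hx : H.hasAxis x n)
      (hi : τ[i]? = some ⟨ci, ys ++ x :: xs, si⟩)
      (hj : τ[j]? = some ⟨cj, xsj, sj⟩)
      (hdvd : n ∣ cj)
      (hmap : typeOffset H (τ.set i ⟨ci, x :: (ys ++ xs), si⟩) ∘ ⇑φ'.symm
            = typeOffset H τ ∘ ⇑φ.symm) :
      LStep H D (.allToAll x j) ⟨φ, typeOffset H τ⟩
        ⟨φ', typeOffset H ((τ.set i ⟨ci * n, ys ++ xs, si⟩).set j ⟨cj / n, x :: xsj, sj⟩)⟩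
  | slice (τ : DType) (i : ℕ) (x : String) (c : ℕ) (xs : List String) (s n : ℕ)
      (φ : DevMap H D)
      (hwf : H.WFType τ) (hx : H.hasAxis x n) (hfresh : x ∉ typeAxes τ)
      (hi : τ[i]? = some ⟨c * n, xs, s⟩) :
      LStep H D (.dynSlice i x) ⟨φ, typeOffset H τ⟩ ⟨φ, typeOffset H (τ.set i ⟨c, x :: xs, s⟩)⟩
  | permute (τ : DType) (ρ : Equiv.Perm (IndexTuple H)) (β' : BOM H)
      (φ φ' : DevMap H D) (π : Equiv.Perm D)
      (hwf : H.WFType τ)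
      (hmap : β' ∘ ⇑φ'.symm = (typeOffset H τ ∘ ⇑ρ) ∘ ⇑φ.symm ∘ ⇑π) :
      LStep H D .allPermute ⟨φ, typeOffset H τ ∘ ⇑ρ⟩ ⟨φ', β'⟩

def LStep.cost {H : Mesh} {D : Type} :
    {l : LLabel} → {a b : DevAssign H D} → LStep H D l a b → ℕ
  | _, _, _, .gather τ i c ys x xs s n .. => localsize (τ.set i ⟨c * n, ys ++ xs, s⟩)
  | _, _, _, .toAll τ .. => localsize τ
  | _, _, _, .slice .. => 0
  | _, _, _, .permute τ .. => localsize τ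

inductive LoSeq (H : Mesh) (D : Type) : DevAssign H D → DevAssign H D → Type where
  | nil (a : DevAssign H D) : LoSeq H D a a
  | cons {a b c : DevAssign H D} (l : LLabel) (st : LStep H D l a b) (s : LoSeq H D b c) :
      LoSeq H D a c

def LoSeq.labels {H : Mesh} {D : Type} : {a b : DevAssign H D} → LoSeq H D a b → List LLabel
  | _, _, .nil _ => []
  | _, _, .cons l _ s => l :: s.labels

def LoSeq.states {H : Mesh} {D : Type} : {a b : DevAssign H D} → LoSeq H D a b → List (DevAssign H D)
  | _, _, .nil a => [a]
  | a, _, .cons _ _ s => a :: s.states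

def LoSeq.cost {H : Mesh} {D : Type} : {a b : DevAssign H D} → LoSeq H D a b → ℕ
  | _, _, .nil _ => 0
  | _, _, .cons _ st s => st.cost + s.cost

/-!
When the first step is an allToAll moving axis `y` (of size `m`) from dimension `a` to
dimension `b`, a slice of any other dimension commutes with it, and a slice of `b` can be done
first, followed by the allToAll and a permute restoring the order of the axes of `b`. A slice of
`a` by an axis of size `n` can be done first on `a` when `n` divides the tile of `a` (then a
permute brings `y` to the front for the allToAll); otherwise, all sizes being prime, `n = m`, the
tile of `a` is unchanged, and slicing `b` followed by a permute suffices. When the first step is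
an allPermute, slice the same dimension of `σ₀` by an axis of the same size that does not occur
in `σ₀`: one exists because, by unique factorisation, two well-formed types over a prime mesh
with equal local and global types use the same multiset of axis sizes.
-/

theorem List.set_eq_self_of_getElem? {α : Type*} {l : List α} {i : ℕ} {a : α}
    (h : l[i]? = some a) : l.set i a = l := by
  obtain ⟨hi, rfl⟩ := List.getElem?_eq_some_iff.mp h
  exact List.set_getElem_self hi

theorem List.map_set_eq_of_getElem? {α β : Type*} {f : α → β} {l : List α} {i : ℕ} {a b : α}
    (h : l[i]? = some a) (hf : f b = f a) : (l.set i b).map f = l.map f := by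
  rw [List.map_set, hf, ← List.map_set, List.set_eq_self_of_getElem? h]

theorem List.exists_mem_notMem_of_perm_map {α β : Type*} [DecidableEq β] {f : α → β}
    {l₀ l₁ : List α} {a : α} (hnd : l₁.Nodup) (hp : (l₀.map f).Perm (l₁.map f))
    (ha₀ : a ∈ l₀) (ha₁ : a ∉ l₁) : ∃ b ∈ l₁, b ∉ l₀ ∧ f b = f a := by
  by_contra! hsub
  set P : α → Bool := fun b => f b = f a
  have hlen : (l₀.filter P).length = (l₁.filter P).length := by
    have h := hp.countP_eq (fun b => decide (b = f a))
    rw [List.countP_map, List.countP_map, List.countP_eq_length_filter,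
      List.countP_eq_length_filter] at h
    exact h
  have hsub' : l₁.filter P ⊆ l₀.filter P := fun b hb => by
    obtain ⟨hb₁, hbP⟩ := List.mem_filter.mp hb
    exact List.mem_filter.mpr ⟨by_contra fun hb₀ => hsub b hb₁ hb₀ (by simpa [P] using hbP), hbP⟩
  have hperm := (List.subperm_of_subset (hnd.filter P) hsub').perm_of_length_le hlen.le
  exact ha₁ (List.mem_of_mem_filter (hperm.mem_iff.mpr (List.mem_filter.mpr ⟨ha₀, by simp [P]⟩)))

theorem typeAxes_eq_flatten (τ : DType) : typeAxes τ = (τ.map Dim.axes).flatten := by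
  induction τ with
  | nil => rfl
  | cons d τ ih => simp [typeAxes, ih]

theorem mem_typeAxes {τ : DType} {z : String} : z ∈ typeAxes τ ↔ ∃ d ∈ τ, z ∈ d.axes := by
  simp [typeAxes_eq_flatten]

theorem Mesh.wfType_iff_nodup {H : Mesh} {τ : DType} :
    H.WFType τ ↔ (∀ d ∈ τ, H.WFDim d) ∧ (typeAxes τ).Nodup := by
  rw [typeAxes_eq_flatten, List.nodup_flatten, List.pairwise_map]
  constructor
  · rintro ⟨hd, hdisj⟩
    refine ⟨hd, ?_, hdisj.imp fun h _ hz hz' => h _ hz hz'⟩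
    simpa using fun d hd' => (hd d hd').2.1
  · rintro ⟨hd, -, hdisj⟩
    exact ⟨hd, hdisj.imp fun h _ hz hz' => h hz hz'⟩

theorem perm_typeAxes_set {τ : DType} {i : ℕ} {d d' : Dim} {l l' : List String}
    (hi : τ[i]? = some d) (hd : (d'.axes ++ l).Perm (d.axes ++ l')) :
    (typeAxes (τ.set i d') ++ l).Perm (typeAxes τ ++ l') := by
  induction τ generalizing i with
  | nil => simp at hi
  | cons e τ ih =>
    cases i with
    | zero =>
      obtain rfl : e = d := by simpa using hi
      simp only [List.set_cons_zero, typeAxes, List.append_assoc]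
      exact (List.perm_append_comm_assoc _ _ _).trans
        ((List.Perm.append_left _ hd).trans (List.perm_append_comm_assoc _ _ _).symm)
    | succ i =>
      simp only [List.set_cons_succ, typeAxes, List.append_assoc]
      exact (ih (by simpa using hi)).append_left _

theorem Mesh.WFType.set {H : Mesh} {τ : DType} {i : ℕ} {d' : Dim} (hwf : H.WFType τ)
    (hd' : H.WFDim d') (hnd : (typeAxes (τ.set i d')).Nodup) : H.WFType (τ.set i d') := by
  refine Mesh.wfType_iff_nodup.mpr ⟨fun e he => ?_, hnd⟩
  rcases List.mem_or_eq_of_mem_set he with he | rfl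
  exacts [hwf.1 e he, hd']

section Steps

variable {H : Mesh} {τ : DType} {i : ℕ} {c s n : ℕ} {x : String} {xs : List String}

theorem typeAxes_set_gather_perm (hi : τ[i]? = some ⟨c, x :: xs, s⟩) (c' : ℕ) :
    (typeAxes (τ.set i ⟨c', xs, s⟩) ++ [x]).Perm (typeAxes τ) := by
  simpa using perm_typeAxes_set (d' := ⟨c', xs, s⟩) (l' := []) hi (by simp)

theorem typeAxes_set_slice_perm (hi : τ[i]? = some ⟨c, xs, s⟩) (c' : ℕ) :
    (typeAxes (τ.set i ⟨c', x :: xs, s⟩)).Perm (typeAxes τ ++ [x]) := by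
  simpa using perm_typeAxes_set (d' := ⟨c', x :: xs, s⟩) (l := []) hi
    (by simpa using (List.perm_append_singleton x xs).symm)

theorem notMem_typeAxes_set_gather (hwf : H.WFType τ) (hi : τ[i]? = some ⟨c, x :: xs, s⟩)
    (c' : ℕ) : x ∉ typeAxes (τ.set i ⟨c', xs, s⟩) := by
  have hnd := (typeAxes_set_gather_perm hi c').nodup_iff.mpr (Mesh.wfType_iff_nodup.mp hwf).2
  exact fun h => (List.nodup_append.mp hnd).2.2 x h x (List.mem_singleton_self x) rfl

theorem Mesh.WFType.set_gather (hwf : H.WFType τ) (hx : H.hasAxis x n)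
    (hi : τ[i]? = some ⟨c, x :: xs, s⟩) : H.WFType (τ.set i ⟨c * n, xs, s⟩) := by
  obtain ⟨hc, hnd, hH, hprod⟩ := hwf.1 _ (List.mem_of_getElem? hi)
  have hn : 1 ≤ n := hx.2 ▸ H.size_pos x hx.1
  refine hwf.set ⟨by simp only at hc ⊢; nlinarith, (List.nodup_cons.mp hnd).2,
    fun z hz => hH z (List.mem_cons_of_mem _ hz), ?_⟩ ?_
  · simp only [List.map_cons, List.prod_cons, hx.2] at hprod ⊢
    rw [← hprod]; ring
  · exact ((typeAxes_set_gather_perm hi _).nodup_iff.mpr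
      (Mesh.wfType_iff_nodup.mp hwf).2).sublist (List.sublist_append_left _ _)

theorem Mesh.WFType.set_slice (hwf : H.WFType τ) (hx : H.hasAxis x n)
    (hfresh : x ∉ typeAxes τ) (hi : τ[i]? = some ⟨c * n, xs, s⟩) :
    H.WFType (τ.set i ⟨c, x :: xs, s⟩) := by
  obtain ⟨hc, hnd, hH, hprod⟩ := hwf.1 _ (List.mem_of_getElem? hi)
  have hnd' : (typeAxes (τ.set i ⟨c, x :: xs, s⟩)).Nodup :=
    (typeAxes_set_slice_perm hi c).nodup_iff.mpr
      (List.nodup_append.mpr ⟨(Mesh.wfType_iff_nodup.mp hwf).2, List.nodup_singleton x,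
        by simpa using fun a ha (hax : a = x) => hfresh (hax ▸ ha)⟩)
  refine hwf.set ⟨Nat.pos_of_mul_pos_right hc, ?_, ?_, ?_⟩ hnd'
  · exact List.nodup_cons.mpr
      ⟨fun h => hfresh (mem_typeAxes.mpr ⟨_, List.mem_of_getElem? hi, h⟩), hnd⟩
  · simpa [hx.1] using hH
  · simp only [List.map_cons, List.prod_cons, hx.2] at hprod ⊢
    rw [← hprod]; ring

end Steps

theorem Step.wfType_target {H : Mesh} {p : Label} {τ₁ τ₂ : DType} (h : Step H p τ₁ τ₂) :
    H.WFType τ₂ := by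
  cases h with
  | allGather _ hwf hx hi => exact hwf.set_gather hx hi
  | dynSlice _ _ hwf hx hfresh hi => exact hwf.set_slice hx hfresh hi
  | allToAll _ _ hwf hij hx hi hj hdvd =>
    refine (hwf.set_gather hx hi).set_slice hx (notMem_typeAxes_set_gather hwf hi _) ?_
    rw [List.getElem?_set_ne hij, hj, Nat.div_mul_cancel hdvd]
  | allPermute _ hwf₂ => exact hwf₂

theorem Step.typeAxes_perm_of_allToAll {H : Mesh} {i j : ℕ} {τ₁ τ₂ : DType}
    (h : Step H (.allToAll i j) τ₁ τ₂) : (typeAxes τ₂).Perm (typeAxes τ₁) := by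
  cases h with
  | @allToAll _ i j ci _ xsi si _ _ _ n _ hij _ hi hj _ =>
    have hj' : (τ₁.set i ⟨ci * n, xsi, si⟩)[j]? = _ := (List.getElem?_set_ne hij).trans hj
    exact (typeAxes_set_slice_perm hj' _).trans (typeAxes_set_gather_perm hi _)

theorem Step.allPermute_set_of_perm {H : Mesh} {τ : DType} {i : ℕ} {d : Dim} {xs : List String}
    (hwf : H.WFType τ) (hi : τ[i]? = some d) (hxs : d.axes.Perm xs) :
    Step H .allPermute τ (τ.set i ⟨d.tile, xs, d.global⟩) := by
  obtain ⟨hc, hnd, hH, hprod⟩ := hwf.1 _ (List.mem_of_getElem? hi)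
  have hnd' : (typeAxes (τ.set i ⟨d.tile, xs, d.global⟩)).Nodup := by
    refine ((List.perm_append_right_iff []).mp ?_).nodup_iff.mpr (Mesh.wfType_iff_nodup.mp hwf).2
    exact perm_typeAxes_set hi (by simpa using hxs.symm)
  refine .allPermute hwf (hwf.set ⟨hc, hxs.nodup_iff.mp hnd,
    fun z hz => hH z (hxs.mem_iff.mpr hz), by rw [← hprod, (hxs.map _).prod_eq]⟩ hnd') ?_ ?_
  · exact (List.map_set_eq_of_getElem? (f := Dim.tile) (b := ⟨d.tile, xs, d.global⟩) hi rfl).symm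
  · exact (List.map_set_eq_of_getElem? (f := Dim.global) (b := ⟨d.tile, xs, d.global⟩) hi rfl).symm

theorem exists_getElem?_of_localtype_globaltype {τ₀ τ₁ : DType} {j : ℕ} {e : Dim}
    (hl : localtype τ₀ = localtype τ₁) (hg : globaltype τ₀ = globaltype τ₁)
    (hj : τ₁[j]? = some e) : ∃ ys, τ₀[j]? = some ⟨e.tile, ys, e.global⟩ := by
  obtain ⟨d, hd, ht⟩ : ∃ d, τ₀[j]? = some d ∧ d.tile = e.tile := by
    simpa [localtype, hj] using congrArg (·[j]?) hl
  obtain ⟨d', hd', hg'⟩ : ∃ d, τ₀[j]? = some d ∧ d.global = e.global := by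
    simpa [globaltype, hj] using congrArg (·[j]?) hg
  obtain rfl : d = d' := Option.some_injective _ (hd.symm.trans hd')
  exact ⟨d.axes, by rw [hd, ← ht, ← hg']⟩

theorem perm_map_size_axes {H : Mesh} (hP : ∀ x ∈ H.axes, (H.size x).Prime) {d e : Dim}
    (hd : H.WFDim d) (he : H.WFDim e) (ht : d.tile = e.tile) (hg : d.global = e.global) :
    (d.axes.map H.size).Perm (e.axes.map H.size) := by
  have hprime : ∀ f : Dim, H.WFDim f → ∀ q ∈ f.axes.map H.size, q.Prime := by
    rintro f hf q hq
    obtain ⟨z, hz, rfl⟩ := List.mem_map.mp hq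
    exact hP z (hf.2.2.1 z hz)
  have hprod : (d.axes.map H.size).prod = (e.axes.map H.size).prod :=
    Nat.eq_of_mul_eq_mul_left hd.1 (by rw [hd.2.2.2, hg, ← he.2.2.2, ht])
  exact (Nat.primeFactorsList_unique hprod (hprime d hd)).trans
    (Nat.primeFactorsList_unique rfl (hprime e he)).symm

theorem perm_map_size_typeAxes {H : Mesh} (hP : ∀ x ∈ H.axes, (H.size x).Prime)
    {τ₀ τ₁ : DType} (h₀ : ∀ d ∈ τ₀, H.WFDim d) (h₁ : ∀ d ∈ τ₁, H.WFDim d)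
    (hl : localtype τ₀ = localtype τ₁) (hg : globaltype τ₀ = globaltype τ₁) :
    ((typeAxes τ₀).map H.size).Perm ((typeAxes τ₁).map H.size) := by
  induction τ₀ generalizing τ₁ with
  | nil => cases τ₁ <;> simp_all [localtype]
  | cons d τ₀ ih =>
    cases τ₁ with
    | nil => simp [localtype] at hl
    | cons e τ₁ =>
      simp only [localtype, globaltype, List.map_cons, List.cons.injEq] at hl hg
      simp only [typeAxes, List.map_append]
      exact (perm_map_size_axes hP (h₀ d (by simp)) (h₁ e (by simp)) hl.1 hg.1).append
        (ih (fun d hd => h₀ d (by simp [hd])) (fun d hd => h₁ d (by simp [hd])) hl.2 hg.2)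

theorem Step.exists_fresh_axis_of_allPermute {H : Mesh} (hP : ∀ x ∈ H.axes, (H.size x).Prime)
    {τ₀ τ₁ : DType} {x : String} {n : ℕ}
    (h : Step H .allPermute τ₀ τ₁) (hx : H.hasAxis x n) (hx₁ : x ∉ typeAxes τ₁) :
    ∃ x', H.hasAxis x' n ∧ x' ∉ typeAxes τ₀ := by
  by_cases hx₀ : x ∈ typeAxes τ₀
  · cases h with
    | allPermute hwf₀ hwf₁ hl hg =>
      obtain ⟨x', hx'₁, hx'₀, hsize⟩ := List.exists_mem_notMem_of_perm_map
        (Mesh.wfType_iff_nodup.mp hwf₁).2 (perm_map_size_typeAxes hP hwf₀.1 hwf₁.1 hl hg) hx₀ hx₁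
      obtain ⟨d, hd, hx'd⟩ := mem_typeAxes.mp hx'₁
      exact ⟨x', ⟨(hwf₁.1 d hd).2.2.1 x' hx'd, hsize.trans hx.2⟩, hx'₀⟩
  · exact ⟨x, hx, hx₀⟩

def SliceThenExchange (H : Mesh) (σ₀ σ₂ : DType) : Prop :=
  ∃ (j' : ℕ) (x' : String) (σ₁' : DType) (s : CSeq H σ₁' σ₂),
    H.WFType σ₁' ∧
    Step H (.dynSlice j' x') σ₀ σ₁' ∧
    s.labels.length ≤ 2 ∧
    (∀ l ∈ s.labels, l.kind = OpKind.toAll ∨ l.kind = OpKind.permute) ∧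
    (s.labels.filter (fun l => decide (l.kind = OpKind.toAll))).length ≤ 1

theorem sliceThenExchange_of_allPermute_dynSlice {H : Mesh}
    (hP : ∀ x ∈ H.axes, (H.size x).Prime) {σ₀ σ₁ σ₂ : DType} {j : ℕ} {x : String}
    (h₁ : Step H .allPermute σ₀ σ₁) (h₂ : Step H (.dynSlice j x) σ₁ σ₂) :
    SliceThenExchange H σ₀ σ₂ := by
  have hwf₂ := h₂.wfType_target
  cases h₂ with | @dynSlice _ _ _ c xs s n _ hx hfresh hj =>
  obtain ⟨x', hx', hfresh'⟩ := h₁.exists_fresh_axis_of_allPermute hP hx hfresh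
  obtain ⟨hwf₀, hl, hg⟩ : H.WFType σ₀ ∧ localtype σ₀ = localtype σ₁ ∧
      globaltype σ₀ = globaltype σ₁ := by
    cases h₁ with | allPermute hwf₀ _ hl hg => exact ⟨hwf₀, hl, hg⟩
  obtain ⟨ys, hd⟩ := exists_getElem?_of_localtype_globaltype hl hg hj
  have slice := Step.dynSlice j x' hwf₀ hx' hfresh' hd
  have perm : Step H .allPermute (σ₀.set j ⟨c, x' :: ys, s⟩) (σ₁.set j ⟨c, x :: xs, s⟩) :=
    .allPermute slice.wfType_target hwf₂ (by simp only [localtype, List.map_set] at hl ⊢; rw [hl])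
      (by simp only [globaltype, List.map_set] at hg ⊢; rw [hg])
  exact ⟨j, x', _, .cons _ perm (.nil _), slice.wfType_target, slice,
    by simp [CSeq.labels, Label.kind]⟩

theorem sliceThenExchange_of_allToAll_dynSlice_of_ne {H : Mesh} {σ₀ σ₁ σ₂ : DType}
    {a b j : ℕ} {x : String} (h₁ : Step H (.allToAll a b) σ₀ σ₁)
    (h₂ : Step H (.dynSlice j x) σ₁ σ₂) (hja : j ≠ a) (hjb : j ≠ b) :
    SliceThenExchange H σ₀ σ₂ := by
  have hperm := h₁.typeAxes_perm_of_allToAll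
  cases h₂ with | @dynSlice _ _ _ c xs s n _ hx hfresh hj =>
  cases h₁ with | @allToAll _ _ _ ca y ysa sa cb xsb sb m hwf₀ hab hy ha hb hdvd =>
  rw [List.getElem?_set_ne (Ne.symm hjb), List.getElem?_set_ne (Ne.symm hja)] at hj
  have slice := Step.dynSlice j x hwf₀ hx (fun h => hfresh (hperm.mem_iff.mpr h)) hj
  have toAll := Step.allToAll a b slice.wfType_target hab hy
    ((List.getElem?_set_ne hja).trans ha) ((List.getElem?_set_ne hjb).trans hb) hdvd
  rw [List.set_comm _ _ hja, List.set_comm _ _ hjb] at toAll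
  exact ⟨j, x, _, .cons _ toAll (.nil _), slice.wfType_target, slice,
    by simp [CSeq.labels, Label.kind]⟩

theorem sliceThenExchange_of_allToAll_dynSlice_target {H : Mesh} {σ₀ σ₁ σ₂ : DType}
    {a b : ℕ} {x : String} (h₁ : Step H (.allToAll a b) σ₀ σ₁)
    (h₂ : Step H (.dynSlice b x) σ₁ σ₂) :
    SliceThenExchange H σ₀ σ₂ := by
  have hperm := h₁.typeAxes_perm_of_allToAll
  cases h₂ with | @dynSlice _ _ _ c xs s n _ hx hfresh hj =>
  cases h₁ with | @allToAll _ _ _ ca y ysa sa cb xsb sb m hwf₀ hab hy ha hb hdvd =>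
  have hb_lt : b < σ₀.length := (List.getElem?_eq_some_iff.mp hb).1
  rw [List.getElem?_set_self (by simpa using hb_lt)] at hj
  obtain ⟨hcb, rfl, rfl⟩ : cb / m = c * n ∧ y :: xsb = xs ∧ sb = s := by simpa using hj
  have hb' : σ₀[b]? = some ⟨c * m * n, xsb, sb⟩ := by
    rw [hb, ← Nat.div_mul_cancel hdvd, hcb]; ring_nf
  have slice := Step.dynSlice b x hwf₀ hx (fun h => hfresh (hperm.mem_iff.mpr h)) hb'
  have toAll := Step.allToAll a b slice.wfType_target hab hy
    ((List.getElem?_set_ne hab.symm).trans ha) (List.getElem?_set_self hb_lt) (dvd_mul_left m c)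
  rw [Nat.mul_div_cancel _ (hy.2 ▸ H.size_pos y hy.1), List.set_comm _ _ hab.symm,
    List.set_set] at toAll
  have perm := Step.allPermute_set_of_perm toAll.wfType_target
    (List.getElem?_set_self (by simpa using hb_lt)) (List.Perm.swap x y xsb)
  dsimp only at perm
  rw [List.set_set] at perm ⊢
  exact ⟨b, x, _, .cons _ toAll (.cons _ perm (.nil _)), slice.wfType_target, slice,
    by simp [CSeq.labels, Label.kind]⟩

theorem sliceThenExchange_of_allToAll_dynSlice_source {H : Mesh}
    (hP : ∀ x ∈ H.axes, (H.size x).Prime) {σ₀ σ₁ σ₂ : DType} {a b : ℕ} {x : String}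
    (h₁ : Step H (.allToAll a b) σ₀ σ₁) (h₂ : Step H (.dynSlice a x) σ₁ σ₂) :
    SliceThenExchange H σ₀ σ₂ := by
  have hperm := h₁.typeAxes_perm_of_allToAll
  have hwf₂ := h₂.wfType_target
  cases h₂ with | @dynSlice _ _ _ c xs s n _ hx hfresh hj =>
  cases h₁ with | @allToAll _ _ _ ca y ysa sa cb xsb sb m hwf₀ hab hy ha hb hdvd =>
  have hfresh₀ : x ∉ typeAxes σ₀ := fun h => hfresh (hperm.mem_iff.mpr h)
  have ha_lt : a < σ₀.length := (List.getElem?_eq_some_iff.mp ha).1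
  rw [List.getElem?_set_ne hab.symm, List.getElem?_set_self ha_lt] at hj
  obtain ⟨hcn, rfl, rfl⟩ : ca * m = c * n ∧ ysa = xs ∧ sa = s := by simpa using hj
  have hn : 0 < n := hx.2 ▸ H.size_pos x hx.1
  by_cases hnca : n ∣ ca
  · have slice := Step.dynSlice a x hwf₀ hx hfresh₀ (by rw [ha, Nat.div_mul_cancel hnca])
    have perm := Step.allPermute_set_of_perm slice.wfType_target
      (List.getElem?_set_self ha_lt) (List.Perm.swap y x ysa)
    dsimp only at perm
    rw [List.set_set] at perm
    have toAll := Step.allToAll a b perm.wfType_target hab hy (List.getElem?_set_self ha_lt)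
      ((List.getElem?_set_ne hab).trans hb) hdvd
    have hc : ca / n * m = c := by
      apply Nat.eq_of_mul_eq_mul_right hn
      rw [mul_right_comm, Nat.div_mul_cancel hnca, hcn]
    rw [List.set_set, hc] at toAll
    rw [List.set_comm _ _ hab.symm, List.set_set]
    exact ⟨a, x, _, .cons _ perm (.cons _ toAll (.nil _)), slice.wfType_target, slice,
      by simp [CSeq.labels, Label.kind]⟩
  · have hnm : n = m := by
      have hnp : n.Prime := hx.2 ▸ hP x hx.1
      have hmp : m.Prime := hy.2 ▸ hP y hy.1
      have hdvd' : n ∣ ca * m := hcn ▸ dvd_mul_left n c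
      exact (Nat.prime_dvd_prime_iff_eq hnp hmp).mp
        (((Nat.Prime.dvd_mul hnp).mp hdvd').resolve_left hnca)
    subst hnm
    obtain rfl : ca = c := Nat.eq_of_mul_eq_mul_right hn hcn
    have slice := Step.dynSlice b x hwf₀ hx hfresh₀ (by rw [hb, Nat.div_mul_cancel hdvd])
    rw [List.set_comm _ _ hab.symm, List.set_set] at hwf₂ ⊢
    have perm : Step H .allPermute _ _ := .allPermute slice.wfType_target hwf₂ ?_ ?_
    · exact ⟨b, x, _, .cons _ perm (.nil _), slice.wfType_target, slice,
        by simp [CSeq.labels, Label.kind]⟩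
    · rw [localtype, localtype, List.map_set, List.map_set,
        List.map_set_eq_of_getElem? (f := Dim.tile) (b := ⟨ca, x :: ysa, sa⟩) ha rfl]
    · rw [globaltype, globaltype, List.map_set, List.map_set,
        List.map_set_eq_of_getElem? (f := Dim.global) (b := ⟨ca, x :: ysa, sa⟩) ha rfl]

/-- Falling Edge Lemma. -/
theorem stmt4 (H : Mesh) (hP : ∀ x ∈ H.axes, (H.size x).Prime)
    (σ₀ σ₁ σ₂ : DType) (p : Label) (j : ℕ) (x : String)
    (hp : p.kind = OpKind.toAll ∨ p.kind = OpKind.permute)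
    (h1 : Step H p σ₀ σ₁) (h2 : Step H (.dynSlice j x) σ₁ σ₂) :
    ∃ (j' : ℕ) (x' : String) (σ₁' : DType) (s : CSeq H σ₁' σ₂),
      H.WFType σ₁' ∧
      Step H (.dynSlice j' x') σ₀ σ₁' ∧
      s.labels.length ≤ 2 ∧
      (∀ l ∈ s.labels, l.kind = OpKind.toAll ∨ l.kind = OpKind.permute) ∧
      (s.labels.filter (fun l => decide (l.kind = OpKind.toAll))).length ≤ 1 := by
  rcases p with _ | _ | ⟨a, b⟩ | _
  · simp [Label.kind] at hp
  · simp [Label.kind] at hp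
  · rcases eq_or_ne j a with rfl | hja
    · exact sliceThenExchange_of_allToAll_dynSlice_source hP h1 h2
    rcases eq_or_ne j b with rfl | hjb
    · exact sliceThenExchange_of_allToAll_dynSlice_target h1 h2
    · exact sliceThenExchange_of_allToAll_dynSlice_of_ne h1 h2 hja hjb
  · exact sliceThenExchange_of_allPermute_dynSlice hP h1 h2
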